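/- Let ϑ be a primitive compatible random substitution of constant length ℓ and let v be a legal word of length ℓ with v ∉ ϑ(𝒜). If gcd(p, ℓ) = 1, then no element of X_ϑ of period p contains v as a subword. -/

import Mathlib

open List

variable {A : Type*}

/-- Extension of a random substitution to words, by concatenation. -/
def substWord (θ : A → Set (List A)) : List A → Set (List A)
  | [] => {[]}
  | a :: u => {w | ∃ x ∈ θ a, ∃ y ∈ substWord θ u, w = x ++ y}

/-- The set of realisations of `θ^k` on a word. -/
def substPowWord (θ : A → Set (List A)) : ℕ → List A → Set (List A)
  | 0, u => {u}
  | (k+1), u => ⋃ v ∈ substPowWord θ k u, substWord θ v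

/-- The power `θ^k` as a random substitution. -/
def powSub (θ : A → Set (List A)) (k : ℕ) : A → Set (List A) :=
  fun a => substPowWord θ k [a]

/-- `θ` is a (finite range) random substitution: every letter has a nonempty
finite set of realisations, all of which are nonempty words. -/
def RandomSubstitution (θ : A → Set (List A)) : Prop :=
  ∀ a : A, (θ a).Nonempty ∧ (θ a).Finite ∧ ∀ w ∈ θ a, w ≠ []

/-- A word is `θ`-legal if it is a subword of a realisation of some power of
`θ` on some letter. -/
def IsLegal (θ : A → Set (List A)) (u : List A) : Prop :=
  ∃ k : ℕ, ∃ a : A, ∃ w ∈ substPowWord θ k [a], u <:+: w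

/-- `θ` has disjoint images. -/
def HasDisjointImages (θ : A → Set (List A)) : Prop :=
  ∀ u v : List A, IsLegal θ u → IsLegal θ v →
    (substWord θ u ∩ substWord θ v).Nonempty → u = v

/-- `θ` has constant length `ℓ`. -/
def ConstantLength (θ : A → Set (List A)) (ℓ : ℕ) : Prop :=
  ∀ a : A, ∀ w ∈ θ a, w.length = ℓ

/-- `θ` is compatible: abelianisations of realisations are well defined. -/
def Compatible [DecidableEq A] (θ : A → Set (List A)) : Prop :=
  ∀ a : A, ∀ u ∈ θ a, ∀ v ∈ θ a, ∀ b : A, u.count b = v.count b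

/-- `θ` is primitive. -/
def Primitive (θ : A → Set (List A)) : Prop :=
  ∃ k : ℕ, ∀ a b : A, ∃ w ∈ substPowWord θ k [a], b ∈ w

/-- The finite subword of a bi-infinite sequence starting at `i`, of length `n`. -/
def extract (x : ℤ → A) (i : ℤ) (n : ℕ) : List A :=
  (List.range n).map fun j => x (i + j)

/-- The RS-subshift of `θ`: bi-infinite sequences all of whose subwords are legal. -/
def Subshift (θ : A → Set (List A)) : Set (ℤ → A) :=
  {x | ∀ i : ℤ, ∀ n : ℕ, IsLegal θ (extract x i n)}

/-- `x` is a realisation-wise image of `y` under `θ`: there is a decomposition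
of `x` into consecutive inflation words, with a cut at the origin, the `n`-th
of which is a realisation of `θ` on `y n`. -/
def SeqImage (θ : A → Set (List A)) (y x : ℤ → A) : Prop :=
  ∃ c : ℤ → ℤ, c 0 = 0 ∧ (∀ n : ℤ, c n < c (n + 1)) ∧
    ∀ n : ℤ, extract x (c n) (c (n + 1) - c n).toNat ∈ θ (y n)

/-- `θ` is globally uniquely recognisable. -/
def GloballyUniquelyRecognisable (θ : A → Set (List A)) : Prop :=
  ∀ x ∈ Subshift θ, ∃! y : ℤ → A, y ∈ Subshift θ ∧
    ∃ k : ℕ, (∃ w ∈ θ (y 0), k < w.length) ∧ SeqImage θ y (fun n => x (n - k))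

/-- `x` has period `p` (as a natural number, acting on indices in `ℤ`). -/
def HasPeriod (x : ℤ → A) (p : ℕ) : Prop :=
  ∀ n : ℤ, x (n + p) = x n

/-- `x` is shift-periodic. -/
def IsPeriodic (x : ℤ → A) : Prop :=
  ∃ p : ℕ, 0 < p ∧ HasPeriod x p

/-- `p` is the prime (least) period of `x`. -/
def PrimePeriod (x : ℤ → A) (p : ℕ) : Prop :=
  0 < p ∧ HasPeriod x p ∧ ∀ q : ℕ, 0 < q → HasPeriod x q → p ≤ q

/-- `u` is a periodic block for `x`: up to shift, `x` is the bi-infinite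
repetition of `u`. -/
def PeriodicBlock (u : List A) (x : ℤ → A) : Prop :=
  u ≠ [] ∧ ∃ i : ℤ, ∀ n : ℤ, extract x (i + n * u.length) u.length = u

/-!
A point of the subshift restricted to a long window is a subword of some realisation
`θ(V)`, whose cuts between inflation words all lie in a single residue class modulo `ℓ`
relative to the window. If `x` has period `p` with `gcd(p, ℓ) = 1`, the occurrence of `v` at
`i` recurs at every `i + k p`, and some `k < ℓ` puts it in that residue class, where it would
have to be an inflation word.
-/

theorem Nat.Coprime.exists_lt_dvd_add_mul {p ℓ : ℕ} (hcop : Nat.Coprime p ℓ) (hℓ : 0 < ℓ)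
    (s : ℕ) : ∃ k < ℓ, ℓ ∣ s + k * p := by
  have : NeZero ℓ := ⟨hℓ.ne'⟩
  have hp : IsUnit (p : ZMod ℓ) := (ZMod.isUnit_iff_coprime p ℓ).mpr hcop
  set k : ZMod ℓ := -(s : ZMod ℓ) * (p : ZMod ℓ)⁻¹
  refine ⟨k.val, k.val_lt, (ZMod.natCast_eq_zero_iff _ ℓ).mp ?_⟩
  push_cast
  rw [ZMod.natCast_zmod_val, mul_assoc, ZMod.inv_mul_of_unit _ hp]
  ring

section Extract

/- The definition of `extract` lifts `List.range n` to `List ℤ` through the list monad;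
this lemma undoes that. -/
theorem extract_eq_map (x : ℤ → A) (i : ℤ) (n : ℕ) :
    extract x i n = (List.range n).map fun j : ℕ => x (i + j) := by
  simp [_root_.extract, ← List.map_eq_flatMap]

@[simp]
theorem extract_length (x : ℤ → A) (i : ℤ) (n : ℕ) : (extract x i n).length = n := by
  simp [extract_eq_map]

theorem extract_add (x : ℤ → A) (i : ℤ) (m n : ℕ) :
    extract x i (m + n) = extract x i m ++ extract x (i + m) n := by
  simp only [extract_eq_map, List.range_add, List.map_append, List.map_map]
  congr 2
  funext j
  simp [add_assoc]

theorem HasPeriod.apply_add_mul {x : ℤ → A} {p : ℕ} (hx : HasPeriod x p) (n : ℤ) (k : ℕ) :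
    x (n + k * p) = x n := by
  induction k with
  | zero => simp
  | succ k ih =>
    rw [← ih, ← hx (n + k * p)]
    congr 1
    push_cast
    ring

theorem HasPeriod.extract_add_mul {x : ℤ → A} {p : ℕ} (hx : HasPeriod x p) (i : ℤ)
    (k n : ℕ) : extract x (i + k * p) n = extract x i n := by
  simp only [extract_eq_map]
  congr 1
  funext j
  rw [add_right_comm, hx.apply_add_mul]

end Extract

section Substitution

variable {θ : A → Set (List A)} {ℓ : ℕ}

theorem ConstantLength.length_of_mem_substWord (hℓ : ConstantLength θ ℓ) {V W : List A}
    (hW : W ∈ substWord θ V) : W.length = V.length * ℓ := by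
  induction V generalizing W with
  | nil => simp_all [substWord]
  | cons a V ih =>
    obtain ⟨z, hz, W', hW', rfl⟩ := hW
    simp [hℓ a z hz, ih hW', add_mul, add_comm]

theorem ConstantLength.mem_of_append_mem_substWord (hℓ : ConstantLength θ ℓ) (hℓpos : 0 < ℓ)
    {V u w t : List A} (hW : u ++ w ++ t ∈ substWord θ V) (hu : ℓ ∣ u.length)
    (hw : w.length = ℓ) : ∃ a, w ∈ θ a := by
  induction V generalizing u with
  | nil =>
    simp only [substWord, Set.mem_singleton_iff, List.append_eq_nil_iff] at hW
    simp [hW.1.2] at hw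
    omega
  | cons a V ih =>
    obtain ⟨z, hz, W', hW', hzW⟩ := hW
    have hz_len := hℓ a z hz
    obtain hu0 | hu_ge := (Nat.eq_zero_or_pos u.length).imp List.eq_nil_of_length_eq_zero
      (Nat.le_of_dvd · hu)
    · subst hu0
      obtain ⟨rfl, -⟩ := List.append_inj (by simpa using hzW) (by rw [hw, hz_len])
      exact ⟨a, hz⟩
    · rw [← List.take_append_drop ℓ u, List.append_assoc, List.append_assoc] at hzW
      obtain ⟨-, rfl⟩ := List.append_inj hzW (by simp [hz_len, hu_ge])
      refine ih (u := u.drop ℓ) (by simpa using hW') ?_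
      simpa using Nat.dvd_sub hu dvd_rfl

theorem IsLegal.exists_infix_substWord {u : List A} (hu : IsLegal θ u) (hlen : 2 ≤ u.length) :
    ∃ V, ∃ W ∈ substWord θ V, u <:+: W := by
  obtain ⟨_ | k, a, W, hW, hinf⟩ := hu
  · rw [substPowWord, Set.mem_singleton_iff] at hW
    subst hW
    have := hinf.length_le
    simp only [List.length_singleton] at this
    omega
  · simp only [substPowWord, Set.mem_iUnion] at hW
    obtain ⟨V, -, hW⟩ := hW
    exact ⟨V, W, hW, hinf⟩

theorem ConstantLength.pos_of_mem_subshift (hℓ : ConstantLength θ ℓ) {x : ℤ → A}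
    (hx : x ∈ Subshift θ) : 0 < ℓ := by
  obtain ⟨V, W, hW, hinf⟩ := (hx 0 2).exists_infix_substWord (by simp)
  have := hinf.length_le
  rw [extract_length, hℓ.length_of_mem_substWord hW] at this
  exact Nat.pos_of_ne_zero (by rintro rfl; simp at this)

theorem ConstantLength.exists_phase_extract_mem (hℓ : ConstantLength θ ℓ) {x : ℤ → A}
    (hx : x ∈ Subshift θ) (i : ℤ) {n : ℕ} (hn : 2 ≤ n) :
    ∃ c : ℕ, ∀ d : ℕ, d + ℓ ≤ n → ℓ ∣ c + d → ∃ a, extract x (i + d) ℓ ∈ θ a := by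
  obtain ⟨V, W, hW, pre, suf, rfl⟩ := (hx i n).exists_infix_substWord (by simpa)
  refine ⟨pre.length, fun d hd hdvd => ?_⟩
  obtain ⟨r, rfl⟩ := Nat.exists_eq_add_of_le hd
  rw [extract_add, extract_add] at hW
  exact hℓ.mem_of_append_mem_substWord (hℓ.pos_of_mem_subshift hx)
    (u := pre ++ extract x i d) (by simpa only [List.append_assoc] using hW)
    (by simpa using hdvd) (by simp)

end Substitution

theorem coprime_period_no_non_inflation_word_general
    (θ : A → Set (List A))
    (ℓ : ℕ) (hℓ : ConstantLength θ ℓ)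
    (v : List A)
    (hvnot : ∀ a : A, v ∉ θ a)
    (p : ℕ) (hcop : Nat.gcd p ℓ = 1) :
    ∀ x ∈ Subshift θ, HasPeriod x p → ¬ ∃ i : ℤ, extract x i ℓ = v := by
  rintro x hx hper ⟨i, rfl⟩
  have hℓpos := hℓ.pos_of_mem_subshift hx
  obtain ⟨c, hc⟩ := hℓ.exists_phase_extract_mem hx i (n := (p + 2) * ℓ) (by nlinarith)
  obtain ⟨k, hk, hdvd⟩ := Nat.Coprime.exists_lt_dvd_add_mul hcop hℓpos c
  obtain ⟨a, ha⟩ := hc (k * p) (by nlinarith) hdvd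
  rw [Nat.cast_mul, hper.extract_add_mul] at ha
  exact hvnot a ha

/-- for a primitive compatible constant-length-`ℓ` substitution, a
legal word of length `ℓ` which is not an inflation word cannot occur in any
`p`-periodic element when `gcd(p, ℓ) = 1`. -/
theorem coprime_period_no_non_inflation_word [DecidableEq A]
    (θ : A → Set (List A)) (hθ : RandomSubstitution θ)
    (hc : Compatible θ) (hprim : Primitive θ)
    (ℓ : ℕ) (hℓ : ConstantLength θ ℓ)
    (v : List A) (hv : IsLegal θ v) (hvlen : v.length = ℓ)
    (hvnot : ∀ a : A, v ∉ θ a)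
    (p : ℕ) (hp : 0 < p) (hcop : Nat.gcd p ℓ = 1) :
    ∀ x ∈ Subshift θ, HasPeriod x p → ¬ ∃ i : ℤ, extract x i ℓ = v :=
  coprime_period_no_non_inflation_word_general θ ℓ hℓ v hvnot p hcop
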